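/- Assume K is both a ℚ-algebra and an integral domain, χ is an ω-invariant sequence of characters, and E is a free K-module with finite basis. Then the addition of [χ](E*) and the external composition law (a, a*) ↦ a⌋a* define on [χ](E*) a structure of left unital module over the semi-symmetric algebra [χ](E): the law is K-bilinear, (aχb)⌋a* = a⌋(b⌋a*) for all a, b ∈ [χ](E) and a* ∈ [χ](E*), and 1⌋a* = a* for all a* ∈ [χ](E*). -/

import Mathlib

noncomputable section

open scoped TensorProduct DirectSum
set_option linter.unusedSectionVars false
set_option linter.unusedVariables false
set_option maxHeartbeats 1000000

/-- The subgroup of permutations of `ℕ` fixing every `n ≥ d`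
(the symmetric group `S_d` inside `S_∞`, in 0-indexed form). -/
def Sfin (d : ℕ) : Subgroup (Equiv.Perm ℕ) where
  carrier := {σ | ∀ n, d ≤ n → σ n = n}
  one_mem' := fun _ _ => rfl
  mul_mem' := by
    intro a b ha hb n hn
    simp only [Equiv.Perm.mul_apply]
    rw [hb n hn, ha n hn]
  inv_mem' := by
    intro a ha n hn
    have h1 : a n = n := ha n hn
    calc a⁻¹ n = a⁻¹ (a n) := by rw [h1]
    _ = n := Equiv.Perm.inv_eq_iff_eq.mpr rfl

/-- The shift `ω` of a finitary permutation of `ℕ`: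
`(ω σ) 0 = 0` and `(ω σ) (m+1) = σ m + 1`. -/
def omegaPerm (σ : Equiv.Perm ℕ) : Equiv.Perm ℕ where
  toFun := fun n => match n with
    | 0 => 0
    | m + 1 => σ m + 1
  invFun := fun n => match n with
    | 0 => 0
    | m + 1 => σ⁻¹ m + 1
  left_inv := by
    intro n
    cases n with
    | zero => rfl
    | succ m => simp
  right_inv := by
    intro n
    cases n with
    | zero => rfl
    | succ m => simp

/-- `ω` as an (injective) monoid endomorphism of `S_∞`. -/
def omegaHom : Equiv.Perm ℕ →* Equiv.Perm ℕ where
  toFun := omegaPerm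
  map_one' := by
    ext n
    cases n <;> rfl
  map_mul' := by
    intro a b
    ext n
    cases n <;> rfl

/-- An `ω`-invariant sequence of `K`-valued linear characters
`χ_d : W_d → U(K)` on an `ω`-stable sequence of permutation groups
`W_d ≤ S_d` (indexed over all `d : ℕ`, 0-indexed). -/
structure OmegaSeq (K : Type*) [CommRing K] where
  W : ℕ → Subgroup (Equiv.Perm ℕ)
  W_le : ∀ d, W d ≤ Sfin d
  mono : ∀ d, W d ≤ W (d + 1)
  omega_mem : ∀ d, ∀ σ ∈ W d, omegaHom σ ∈ W (d + 1)
  χ : ∀ d, W d →* Kˣ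
  χ_res : ∀ d (σ : Equiv.Perm ℕ) (h : σ ∈ W d),
    χ (d + 1) ⟨σ, mono d h⟩ = χ d ⟨σ, h⟩
  χ_omega : ∀ d (σ : Equiv.Perm ℕ) (h : σ ∈ W d),
    χ (d + 1) ⟨omegaHom σ, omega_mem d σ h⟩ = χ d ⟨σ, h⟩

lemma Sfin.apply_lt {d : ℕ} {σ : Equiv.Perm ℕ} (h : σ ∈ Sfin d) {x : ℕ}
    (hx : x < d) : σ x < d := by
  have h' : ∀ n, d ≤ n → σ n = n := h
  by_contra hge
  push_neg at hge
  have h1 : σ (σ x) = σ x := h' (σ x) hge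
  have h2 : σ x = x := σ.injective h1
  rw [h2] at hge
  omega

/-- The restriction of a permutation `σ ∈ S_d ≤ S_∞` to a permutation
of `Fin d`. -/
def restrictFin {d : ℕ} (σ : Equiv.Perm ℕ) (h : σ ∈ Sfin d) :
    Equiv.Perm (Fin d) where
  toFun x := ⟨σ x, Sfin.apply_lt h x.2⟩
  invFun x := ⟨σ⁻¹ x, Sfin.apply_lt (inv_mem h) x.2⟩
  left_inv x := by
    ext
    simp
  right_inv x := by
    ext
    simp

/-- The action of a permutation `σ` of `Fin d` on the `d`-th tensor power
`T^d(E)`, determined by `σ • (x₁ ⊗ ⋯ ⊗ x_d) = x_{σ⁻¹(1)} ⊗ ⋯ ⊗ x_{σ⁻¹(d)}`. -/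
def permAct (K : Type*) [CommRing K] (E : Type*) [AddCommGroup E] [Module K E]
    (d : ℕ) (σ : Equiv.Perm (Fin d)) :
    (⨂[K] (_ : Fin d), E) ≃ₗ[K] ⨂[K] (_ : Fin d), E :=
  PiTensorProduct.reindex K (fun _ : Fin d => E) σ

/-- The permutation of `Fin d` induced by `σ ∈ W_d`. -/
def rAct {K : Type*} [CommRing K] (S : OmegaSeq K) (d : ℕ) (σ : S.W d) :
    Equiv.Perm (Fin d) :=
  restrictFin (σ : Equiv.Perm ℕ) (S.W_le d σ.2)

/-- The submodule `_{χ_d⁻¹}T^d(E)` of `T^d(E)`, generated by the elements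
`χ_d⁻¹(σ) z − σ z`, `σ ∈ W_d`. -/
def seqKer {K : Type*} [CommRing K] (S : OmegaSeq K)
    (E : Type*) [AddCommGroup E] [Module K E] (d : ℕ) :
    Submodule K (⨂[K] (_ : Fin d), E) :=
  Submodule.span K {w | ∃ (σ : S.W d) (z : ⨂[K] (_ : Fin d), E),
    w = (((S.χ d σ)⁻¹ : Kˣ) : K) • z - permAct K E d (rAct S d σ) z}

/-- The `d`-th semi-symmetric power `[χ_d]^d(E) = T^d(E)/_{χ_d⁻¹}T^d(E)`. -/
abbrev Qpow {K : Type*} [CommRing K] (S : OmegaSeq K)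
    (E : Type*) [AddCommGroup E] [Module K E] (d : ℕ) :=
  (⨂[K] (_ : Fin d), E) ⧸ seqKer S E d

/-- The semi-symmetric algebra `[χ](E) = ⨁_{d ≥ 0} [χ_d]^d(E)` of weight `χ`,
as a graded `K`-module. -/
abbrev SemiAlg {K : Type*} [CommRing K] (S : OmegaSeq K)
    (E : Type*) [AddCommGroup E] [Module K E] :=
  ⨁ d : ℕ, Qpow S E d

/-- The decomposable `d-χ`-vector `x₁ χ ⋯ χ x_d` as an element of the
semi-symmetric algebra. -/
def decEl {K : Type*} [CommRing K] (S : OmegaSeq K)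
    {E : Type*} [AddCommGroup E] [Module K E] (d : ℕ) (x : Fin d → E) :
    SemiAlg S E :=
  DirectSum.lof K ℕ (fun d => Qpow S E d) d
    (Submodule.Quotient.mk (PiTensorProduct.tprod K x))

/-- Strict lexicographic comparison of functions. -/
def lexLT {ι : Type*} [LT ι] {α : Type*} [LT α] (f g : ι → α) : Prop :=
  Pi.Lex (· < ·) (fun {_} => (· < ·)) f g

/-- The `m`-th iterate of `ω` as a monoid endomorphism of `S_∞`. -/
def omegaPow : ℕ → (Equiv.Perm ℕ →* Equiv.Perm ℕ)
  | 0 => MonoidHom.id _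
  | m + 1 => omegaHom.comp (omegaPow m)

/-- The offset `n₁ + ⋯ + n_{i-1}` of the `i`-th block of a composition. -/
def offset {k : ℕ} (c : Fin k → ℕ) (i : Fin k) : ℕ := ∑ i' ∈ Finset.Iio i, c i'

/-- The subgroup `X(n₁,…,n_k) = W_{n₁} · ω^{n₁}(W_{n₂}) ⋯ ω^{n₁+⋯+n_{k−1}}(W_{n_k})`
of `W_n`. -/
def Xsub {K : Type*} [CommRing K] (S : OmegaSeq K) {k : ℕ} (c : Fin k → ℕ) :
    Subgroup (Equiv.Perm ℕ) :=
  ⨆ i : Fin k, (S.W (c i)).map (omegaPow (offset c i))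

/-- The set `M(χ;n;n₁,…,n_k)` of lexicographically minimal representatives of
the left cosets of `W_n` modulo `X(n₁,…,n_k)`. -/
def MinRepSet {K : Type*} [CommRing K] (S : OmegaSeq K) (n : ℕ) {k : ℕ}
    (c : Fin k → ℕ) : Set (Equiv.Perm ℕ) :=
  {σ | σ ∈ S.W n ∧ ∀ x ∈ Xsub S c, ¬ lexLT ⇑(σ * x) ⇑σ}

/-- The decomposable `d-χ`-vector `x₀ χ ⋯ χ x_{d-1}` built from the first `d`
terms of a sequence `x : ℕ → E`. -/
def elN {K : Type*} [CommRing K] (S : OmegaSeq K) {E : Type*} [AddCommGroup E]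
    [Module K E] (d : ℕ) (x : ℕ → E) : SemiAlg S E :=
  decEl S d (fun t => x t)

/-- The value `d_{χ_d}^{W_d}((⟨x_i, x*_j⟩)_{i,j})` of the canonical pairing on
a pair of decomposables of degree `d`. -/
def pairVal {K : Type*} [CommRing K] (S : OmegaSeq K) {E : Type*}
    [AddCommGroup E] [Module K E] (d : ℕ) (x : ℕ → E)
    (y : ℕ → Module.Dual K E) : K :=
  ∑ᶠ σ : S.W d, ((S.χ d σ : Kˣ) : K) *
    ∏ t ∈ Finset.range d, y t (x (((σ : Equiv.Perm ℕ))⁻¹ t))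

/-- Concatenation (splice) of two sequences, the second starting at
position `d`. -/
def splice {E : Type*} (d : ℕ) (x y : ℕ → E) : ℕ → E :=
  fun t => if t < d then x t else y (t - d)

/-! ### Auxiliary development -/

section Aux

variable {K : Type*} [CommRing K] (S : OmegaSeq K)

lemma rAct_injective (d : ℕ) : Function.Injective (rAct S d) := by
  intro σ τ h
  ext n
  by_cases hn : n < d
  · have := congrArg (fun e => ((e ⟨n, hn⟩ : Fin d) : ℕ)) h
    simpa [rAct, restrictFin] using this
  · push_neg at hn
    rw [S.W_le d σ.2 n hn, S.W_le d τ.2 n hn]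

noncomputable instance (d : ℕ) : Fintype (S.W d) := by
  have : Finite (S.W d) := Finite.of_injective _ (rAct_injective S d)
  exact Fintype.ofFinite _

lemma rAct_mul (d : ℕ) (σ τ : S.W d) :
    rAct S d (σ * τ) = rAct S d σ * rAct S d τ := by
  ext x
  rfl

lemma rAct_one (d : ℕ) : rAct S d 1 = 1 := by
  ext x
  rfl

lemma rAct_inv (d : ℕ) (σ : S.W d) : rAct S d σ⁻¹ = (rAct S d σ)⁻¹ := by
  have := rAct_mul S d σ⁻¹ σ
  rw [inv_mul_cancel, rAct_one] at this
  exact eq_inv_of_mul_eq_one_left this.symm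

variable {E : Type*} [AddCommGroup E] [Module K E]

lemma permAct_tprod (d : ℕ) (e : Equiv.Perm (Fin d)) (x : Fin d → E) :
    permAct K E d e (PiTensorProduct.tprod K x) =
      PiTensorProduct.tprod K (fun i => x (e.symm i)) := by
  simp [permAct]

lemma permAct_mul_apply (d : ℕ) (e f : Equiv.Perm (Fin d))
    (z : ⨂[K] (_ : Fin d), E) :
    permAct K E d (e * f) z = permAct K E d e (permAct K E d f z) := by
  have : (permAct K E d (e * f)).toLinearMap =
      ((permAct K E d e).toLinearMap).comp (permAct K E d f).toLinearMap := by
    apply PiTensorProduct.ext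
    apply MultilinearMap.ext
    intro x
    simp only [LinearMap.compMultilinearMap_apply, LinearMap.coe_comp,
      LinearEquiv.coe_coe, Function.comp_apply, permAct_tprod]
    rfl
  exact LinearMap.congr_fun this z

lemma permAct_one_apply (d : ℕ) (z : ⨂[K] (_ : Fin d), E) :
    permAct K E d 1 z = z := by
  have : (permAct K E d (1 : Equiv.Perm (Fin d))).toLinearMap = LinearMap.id := by
    apply PiTensorProduct.ext
    apply MultilinearMap.ext
    intro x
    simp only [LinearMap.compMultilinearMap_apply, LinearMap.id_coe, id_eq,
      LinearEquiv.coe_coe, permAct_tprod]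
    rfl
  exact LinearMap.congr_fun this z

/-- The unnormalized averaging operator `∑_{σ ∈ W_d} χ(σ) • σ` on `T^d(E)`. -/
noncomputable def chSum (d : ℕ) : (⨂[K] (_ : Fin d), E) →ₗ[K] ⨂[K] (_ : Fin d), E :=
  ∑ σ : S.W d, ((S.χ d σ : Kˣ) : K) • (permAct K E d (rAct S d σ)).toLinearMap

lemma chSum_apply (d : ℕ) (z : ⨂[K] (_ : Fin d), E) :
    chSum S d z = ∑ σ : S.W d, ((S.χ d σ : Kˣ) : K) • permAct K E d (rAct S d σ) z := by
  simp [chSum, LinearMap.sum_apply]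

lemma chSum_perm (d : ℕ) (τ : S.W d) (z : ⨂[K] (_ : Fin d), E) :
    chSum S d (permAct K E d (rAct S d τ) z) =
      (((S.χ d τ)⁻¹ : Kˣ) : K) • chSum S d z := by
  rw [chSum_apply, chSum_apply, Finset.smul_sum]
  rw [← Equiv.sum_comp (Equiv.mulRight τ⁻¹) (fun σ : S.W d =>
    ((S.χ d σ : Kˣ) : K) • permAct K E d (rAct S d σ) (permAct K E d (rAct S d τ) z))]
  apply Finset.sum_congr rfl
  intro σ _
  simp only [Equiv.coe_mulRight]
  rw [← permAct_mul_apply, ← rAct_mul]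
  have h1 : σ * τ⁻¹ * τ = σ := by group
  rw [h1]
  rw [map_mul, map_inv]
  rw [smul_smul]
  congr 1
  push_cast
  ring

lemma sub_chSum_mem (d : ℕ) (z : ⨂[K] (_ : Fin d), E) :
    (Fintype.card (S.W d) : K) • z - chSum S d z ∈ seqKer S E d := by
  have key : (Fintype.card (S.W d) : K) • z - chSum S d z
      = ∑ σ : S.W d, ((S.χ d σ : Kˣ) : K) •
        ((((S.χ d σ)⁻¹ : Kˣ) : K) • z - permAct K E d (rAct S d σ) z) := by
    have h : ∀ σ : S.W d, ((S.χ d σ : Kˣ) : K) •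
        ((((S.χ d σ)⁻¹ : Kˣ) : K) • z - permAct K E d (rAct S d σ) z)
        = z - ((S.χ d σ : Kˣ) : K) • permAct K E d (rAct S d σ) z := by
      intro σ
      rw [smul_sub, smul_smul]
      congr 2
      rw [← Units.val_mul, mul_inv_cancel, Units.val_one, one_smul]
    simp only [h]
    rw [Finset.sum_sub_distrib, chSum_apply, Finset.sum_const, Finset.card_univ,
      Nat.cast_smul_eq_nsmul]
  rw [key]
  exact Submodule.sum_mem _ fun σ _ =>
    Submodule.smul_mem _ _ (Submodule.subset_span ⟨σ, z, rfl⟩)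

/-- The canonical pairing `T^d(E^*) ⊗ T^d(E) → K`, as a multilinear map in the
dual-side variables. -/
noncomputable def pairMulti (d : ℕ) :
    MultilinearMap K (fun _ : Fin d => Module.Dual K E)
      ((⨂[K] (_ : Fin d), E) →ₗ[K] K) where
  toFun y := PiTensorProduct.lift
    ((MultilinearMap.mkPiAlgebra K (Fin d) K).compLinearMap y)
  map_update_add' := by
    intro _ y i v w
    apply PiTensorProduct.ext
    apply MultilinearMap.ext
    intro x
    have hrw : ∀ (v : Module.Dual K E) (j),
        (Function.update y i v j) (x j)
          = Function.update (fun k => y k (x k)) i (v (x i)) j := fun v j =>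
      Function.apply_update (fun k (w : Module.Dual K E) => w (x k)) y i v j
    simp only [LinearMap.compMultilinearMap_apply, PiTensorProduct.lift.tprod,
      MultilinearMap.compLinearMap_apply, MultilinearMap.mkPiAlgebra_apply,
      LinearMap.add_apply, hrw]
    have := (MultilinearMap.mkPiAlgebra K (Fin d) K).map_update_add
      (fun k => y k (x k)) i (v (x i)) (w (x i))
    simp only [MultilinearMap.mkPiAlgebra_apply] at this
    exact this
  map_update_smul' := by
    intro _ y i c v
    apply PiTensorProduct.ext
    apply MultilinearMap.ext
    intro x
    have hrw : ∀ (v : Module.Dual K E) (j),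
        (Function.update y i v j) (x j)
          = Function.update (fun k => y k (x k)) i (v (x i)) j := fun v j =>
      Function.apply_update (fun k (w : Module.Dual K E) => w (x k)) y i v j
    simp only [LinearMap.compMultilinearMap_apply, PiTensorProduct.lift.tprod,
      MultilinearMap.compLinearMap_apply, MultilinearMap.mkPiAlgebra_apply,
      LinearMap.smul_apply, hrw]
    have := (MultilinearMap.mkPiAlgebra K (Fin d) K).map_update_smul
      (fun k => y k (x k)) i c (v (x i))
    simp only [MultilinearMap.mkPiAlgebra_apply] at this
    exact this

/-- The canonical pairing `T^d(E^*) → (T^d(E))^*`. -/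
noncomputable def pairT (d : ℕ) :
    (⨂[K] (_ : Fin d), Module.Dual K E) →ₗ[K] (⨂[K] (_ : Fin d), E) →ₗ[K] K :=
  PiTensorProduct.lift (pairMulti (E := E) d)

lemma pairT_tprod (d : ℕ) (y : Fin d → Module.Dual K E) (x : Fin d → E) :
    pairT d (PiTensorProduct.tprod K y) (PiTensorProduct.tprod K x)
      = ∏ i, (y i) (x i) := by
  simp [pairT, pairMulti]

lemma pairT_perm (d : ℕ) (e : Equiv.Perm (Fin d))
    (u : ⨂[K] (_ : Fin d), Module.Dual K E) (z : ⨂[K] (_ : Fin d), E) :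
    pairT d (permAct K (Module.Dual K E) d e u) z
      = pairT d u (permAct K E d e⁻¹ z) := by
  have h : (pairT (E := E) d).comp (permAct K (Module.Dual K E) d e).toLinearMap
      = (LinearMap.lcomp K K (permAct K E d e⁻¹).toLinearMap).comp
          (pairT (E := E) d) := by
    apply PiTensorProduct.ext
    apply MultilinearMap.ext
    intro y
    apply PiTensorProduct.ext
    apply MultilinearMap.ext
    intro x
    simp only [LinearMap.compMultilinearMap_apply, LinearMap.coe_comp,
      LinearEquiv.coe_coe, Function.comp_apply, LinearMap.lcomp_apply,
      permAct_tprod, pairT_tprod]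
    rw [← Equiv.prod_comp e (fun i => (y (e.symm i)) (x i))]
    exact Finset.prod_congr rfl fun i _ => by rw [Equiv.symm_apply_apply, Equiv.Perm.inv_def, Equiv.symm_symm]
  have h2 := LinearMap.congr_fun (LinearMap.congr_fun h u) z
  simpa using h2

section Module.Basis

variable {ι : Type*} [Fintype ι] [DecidableEq ι]

lemma tprod_expand_dual (b : Module.Basis ι K E) (d : ℕ) (y : Fin d → Module.Dual K E) :
    (PiTensorProduct.tprod K y : ⨂[K] (_ : Fin d), Module.Dual K E)
      = ∑ f : Fin d → ι, (∏ i, y i (b (f i))) •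
          PiTensorProduct.tprod K (fun i => b.coord (f i)) := by
  have hy : y = fun i => ∑ j : ι, (y i) (b j) • b.coord j := by
    funext i
    have := b.dualBasis.sum_repr (y i)
    simp only [Module.Basis.dualBasis_repr, Module.Basis.coe_dualBasis] at this
    exact this.symm
  conv_lhs => rw [hy]
  rw [MultilinearMap.map_sum]
  apply Finset.sum_congr rfl
  intro f _
  rw [MultilinearMap.map_smul_univ]

lemma tprod_expand_vec (b : Module.Basis ι K E) (d : ℕ) (x : Fin d → E) :
    (PiTensorProduct.tprod K x : ⨂[K] (_ : Fin d), E)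
      = ∑ f : Fin d → ι, (∏ i, b.coord (f i) (x i)) •
          PiTensorProduct.tprod K (fun i => b (f i)) := by
  have hx : x = fun i => ∑ j : ι, b.coord j (x i) • b j := by
    funext i
    have := b.sum_repr (x i)
    simp only [Module.Basis.coord_apply] at this ⊢
    exact this.symm
  conv_lhs => rw [hx]
  rw [MultilinearMap.map_sum]
  apply Finset.sum_congr rfl
  intro f _
  rw [MultilinearMap.map_smul_univ]

lemma pairT_inj_dual (b : Module.Basis ι K E) (d : ℕ) (u : ⨂[K] (_ : Fin d), Module.Dual K E)
    (h : ∀ x : Fin d → E, pairT d u (PiTensorProduct.tprod K x) = 0) :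
    u = 0 := by
  set Θ : ((Fin d → ι) → K) →ₗ[K] ⨂[K] (_ : Fin d), Module.Dual K E :=
    ∑ f : Fin d → ι, (LinearMap.proj f).smulRight
      (PiTensorProduct.tprod K (fun i => b.coord (f i))) with hΘ
  set Ψ : (⨂[K] (_ : Fin d), Module.Dual K E) →ₗ[K] ((Fin d → ι) → K) :=
    LinearMap.pi (fun f => (pairT d).flip
      (PiTensorProduct.tprod K (fun i => b (f i)))) with hΨ
  have hTΨ : Θ.comp Ψ = LinearMap.id := by
    apply PiTensorProduct.ext
    apply MultilinearMap.ext
    intro y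
    simp only [LinearMap.compMultilinearMap_apply, LinearMap.coe_comp,
      Function.comp_apply, LinearMap.id_coe, id_eq, hΘ, hΨ,
      LinearMap.coe_sum, Finset.sum_apply, LinearMap.smulRight_apply,
      LinearMap.proj_apply, LinearMap.pi_apply, LinearMap.flip_apply,
      pairT_tprod]
    exact (tprod_expand_dual b d y).symm
  have hu : Ψ u = 0 := by
    funext f
    simpa [hΨ] using h (fun i => b (f i))
  have := LinearMap.congr_fun hTΨ u
  simp only [LinearMap.coe_comp, Function.comp_apply, LinearMap.id_coe, id_eq] at this
  rw [← this, hu, map_zero]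

lemma pairT_inj_vec (b : Module.Basis ι K E) (d : ℕ) (z : ⨂[K] (_ : Fin d), E)
    (h : ∀ y : Fin d → Module.Dual K E,
      pairT d (PiTensorProduct.tprod K y) z = 0) :
    z = 0 := by
  set Θ : ((Fin d → ι) → K) →ₗ[K] ⨂[K] (_ : Fin d), E :=
    ∑ f : Fin d → ι, (LinearMap.proj f).smulRight
      (PiTensorProduct.tprod K (fun i => b (f i))) with hΘ
  set Ψ : (⨂[K] (_ : Fin d), E) →ₗ[K] ((Fin d → ι) → K) :=
    LinearMap.pi (fun f => pairT d
      (PiTensorProduct.tprod K (fun i => b.coord (f i)))) with hΨ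
  have hTΨ : Θ.comp Ψ = LinearMap.id := by
    apply PiTensorProduct.ext
    apply MultilinearMap.ext
    intro x
    simp only [LinearMap.compMultilinearMap_apply, LinearMap.coe_comp,
      Function.comp_apply, LinearMap.id_coe, id_eq, hΘ, hΨ,
      LinearMap.coe_sum, Finset.sum_apply, LinearMap.smulRight_apply,
      LinearMap.proj_apply, LinearMap.pi_apply, pairT_tprod]
    exact (tprod_expand_vec b d x).symm
  have hu : Ψ z = 0 := by
    funext f
    simpa [hΨ] using h (fun i => b.coord (f i))
  have := LinearMap.congr_fun hTΨ z
  simp only [LinearMap.coe_comp, Function.comp_apply, LinearMap.id_coe, id_eq] at this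
  rw [← this, hu, map_zero]

end Module.Basis

/-- The adjoint averaging operator `∑_{σ ∈ W_d} χ(σ) • σ⁻¹` on `T^d(E^*)`. -/
noncomputable def chSumAdj (d : ℕ) :
    (⨂[K] (_ : Fin d), Module.Dual K E) →ₗ[K] ⨂[K] (_ : Fin d), Module.Dual K E :=
  ∑ σ : S.W d, ((S.χ d σ : Kˣ) : K) •
    (permAct K (Module.Dual K E) d (rAct S d σ)⁻¹).toLinearMap

lemma chSumAdj_apply (d : ℕ) (u : ⨂[K] (_ : Fin d), Module.Dual K E) :
    chSumAdj S d u = ∑ σ : S.W d, ((S.χ d σ : Kˣ) : K) •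
      permAct K (Module.Dual K E) d (rAct S d σ)⁻¹ u := by
  simp [chSumAdj, LinearMap.sum_apply]

lemma pairT_chSum (d : ℕ) (u : ⨂[K] (_ : Fin d), Module.Dual K E)
    (z : ⨂[K] (_ : Fin d), E) :
    pairT d u (chSum S d z) = pairT d (chSumAdj S d u) z := by
  have h1 : pairT d u (chSum S d z) = ∑ σ : S.W d, ((S.χ d σ : Kˣ) : K) *
      pairT d u (permAct K E d (rAct S d σ) z) := by
    rw [chSum_apply, map_sum]
    simp [smul_eq_mul]
  have h2 : pairT d (chSumAdj S d u) z = ∑ σ : S.W d, ((S.χ d σ : Kˣ) : K) *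
      pairT d (permAct K (Module.Dual K E) d (rAct S d σ)⁻¹ u) z := by
    rw [chSumAdj_apply, map_sum]
    simp [smul_eq_mul, LinearMap.sum_apply]
  rw [h1, h2]
  apply Finset.sum_congr rfl
  intro σ _
  congr 1
  have := pairT_perm d (rAct S d σ)⁻¹ u z
  rw [inv_inv] at this
  exact this.symm

lemma chSumAdj_eq (d : ℕ) (u : ⨂[K] (_ : Fin d), Module.Dual K E) :
    chSumAdj S d u = ∑ σ : S.W d, (((S.χ d σ)⁻¹ : Kˣ) : K) •
      permAct K (Module.Dual K E) d (rAct S d σ) u := by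
  rw [chSumAdj_apply]
  rw [← Equiv.sum_comp (Equiv.inv (S.W d)) (fun σ : S.W d =>
    (((S.χ d σ)⁻¹ : Kˣ) : K) • permAct K (Module.Dual K E) d (rAct S d σ) u)]
  apply Finset.sum_congr rfl
  intro σ _
  simp only [Equiv.inv_apply]
  rw [map_inv, inv_inv, rAct_inv]

lemma chSumAdj_eq_chSum (d : ℕ)
    (hsq : ∀ σ : S.W d, ((S.χ d σ : Kˣ) : K) * ((S.χ d σ : Kˣ) : K) = 1)
    (u : ⨂[K] (_ : Fin d), Module.Dual K E) :
    chSumAdj S d u = chSum S d u := by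
  rw [chSumAdj_eq, chSum_apply]
  apply Finset.sum_congr rfl
  intro σ _
  have hu : S.χ d σ * S.χ d σ = 1 := by
    apply Units.ext
    push_cast
    exact hsq σ
  have : (S.χ d σ)⁻¹ = S.χ d σ := inv_eq_of_mul_eq_one_right hu
  rw [this]

lemma congr_permAct (d : ℕ) {F : Type*} [AddCommGroup F] [Module K F]
    (g : E ≃ₗ[K] F) (e : Equiv.Perm (Fin d)) (z : ⨂[K] (_ : Fin d), E) :
    (PiTensorProduct.congr (fun _ : Fin d => g)) (permAct K E d e z)
      = permAct K F d e ((PiTensorProduct.congr (fun _ : Fin d => g)) z) := by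
  have h : ((PiTensorProduct.congr (fun _ : Fin d => g)).toLinearMap).comp
        (permAct K E d e).toLinearMap
      = ((permAct K F d e).toLinearMap).comp
        (PiTensorProduct.congr (fun _ : Fin d => g)).toLinearMap := by
    apply PiTensorProduct.ext
    apply MultilinearMap.ext
    intro x
    simp only [LinearMap.compMultilinearMap_apply, LinearMap.coe_comp,
      LinearEquiv.coe_coe, Function.comp_apply, permAct_tprod,
      PiTensorProduct.congr_tprod]
  exact LinearMap.congr_fun h z

lemma chSum_congr (d : ℕ) {F : Type*} [AddCommGroup F] [Module K F]
    (g : E ≃ₗ[K] F) (z : ⨂[K] (_ : Fin d), E) :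
    chSum S d ((PiTensorProduct.congr (fun _ : Fin d => g)) z)
      = (PiTensorProduct.congr (fun _ : Fin d => g)) (chSum S d z) := by
  rw [chSum_apply, chSum_apply, map_sum]
  apply Finset.sum_congr rfl
  intro σ _
  rw [map_smul, congr_permAct]

lemma chSum_dual_zero {ι : Type*} [Fintype ι] [DecidableEq ι] (b : Module.Basis ι K E)
    (d : ℕ) (hz : ∀ z : ⨂[K] (_ : Fin d), E, chSum S d z = 0)
    (u : ⨂[K] (_ : Fin d), Module.Dual K E) : chSum S d u = 0 := by
  set g : E ≃ₗ[K] Module.Dual K E := b.equiv b.dualBasis (Equiv.refl ι) with hg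
  set G := PiTensorProduct.congr (fun _ : Fin d => g) with hG
  have : u = G (G.symm u) := (G.apply_symm_apply u).symm
  rw [this, chSum_congr, hz, map_zero]

/-- Core non-degeneracy step: an element of `T^d(E^*)` orthogonal to the image
of the averaging operator lies in `seqKer`. -/
lemma nondeg_core {ι : Type*} [Fintype ι] [DecidableEq ι] [Algebra ℚ K]
    (b : Module.Basis ι K E) (d : ℕ)
    (u : ⨂[K] (_ : Fin d), Module.Dual K E)
    (hchar : (∀ σ : S.W d, ((S.χ d σ : Kˣ) : K) * ((S.χ d σ : Kˣ) : K) = 1) ∨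
      (∀ z : ⨂[K] (_ : Fin d), E, chSum S d z = 0))
    (h0 : ∀ x : Fin d → E,
      pairT d u (chSum S d (PiTensorProduct.tprod K x)) = 0) :
    u ∈ seqKer S (Module.Dual K E) d := by
  have hD : chSum S d u = 0 := by
    rcases hchar with h | h
    · have hAdj : chSumAdj S d u = 0 := by
        apply pairT_inj_dual b d
        intro x
        rw [← pairT_chSum]
        exact h0 x
      rw [← chSumAdj_eq_chSum S d h u, hAdj]
    · exact chSum_dual_zero S b d h u
  have hmem : (Fintype.card (S.W d) : K) • u ∈ seqKer S (Module.Dual K E) d := by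
    have := sub_chSum_mem S d u
    rw [hD, sub_zero] at this
    exact this
  have hcard : (Fintype.card (S.W d) : ℚ) ≠ 0 := by
    have : 0 < Fintype.card (S.W d) := Fintype.card_pos
    exact_mod_cast this.ne'
  have : u = algebraMap ℚ K ((Fintype.card (S.W d) : ℚ)⁻¹) •
      ((Fintype.card (S.W d) : K) • u) := by
    rw [smul_smul]
    have : algebraMap ℚ K ((Fintype.card (S.W d) : ℚ)⁻¹) *
        (Fintype.card (S.W d) : K) = 1 := by
      rw [show ((Fintype.card (S.W d) : K)) =
        algebraMap ℚ K ((Fintype.card (S.W d) : ℚ)) by push_cast; simp]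
      rw [← map_mul, inv_mul_cancel₀ hcard, map_one]
    rw [this, one_smul]
  rw [this]
  exact Submodule.smul_mem _ _ hmem

/-- Extension of a `Fin d`-indexed family to a sequence. -/
def extSeq {F : Type*} [Zero F] (d : ℕ) (x : Fin d → F) : ℕ → F :=
  fun n => if h : n < d then x ⟨n, h⟩ else 0

lemma extSeq_spec {F : Type*} [Zero F] (d : ℕ) (x : Fin d → F) :
    (fun t : Fin d => extSeq d x ↑t) = x :=
  funext fun t => dif_pos t.2

lemma pairVal_eq (d : ℕ) (x : ℕ → E) (y : ℕ → Module.Dual K E) :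
    pairVal S d x y = ∑ σ : S.W d, ((S.χ d σ : Kˣ) : K) *
      ∏ t : Fin d, y ↑t (x (((σ : Equiv.Perm ℕ))⁻¹ ↑t)) := by
  rw [pairVal, finsum_eq_sum_of_fintype]
  apply Finset.sum_congr rfl
  intro σ _
  congr 1
  exact (Fin.prod_univ_eq_prod_range
    (fun t => y t (x (((σ : Equiv.Perm ℕ))⁻¹ t))) d).symm

lemma pairVal_pairT (d : ℕ) (x : ℕ → E) (y : ℕ → Module.Dual K E) :
    pairVal S d x y = pairT d (PiTensorProduct.tprod K (fun t : Fin d => y ↑t))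
      (chSum S d (PiTensorProduct.tprod K (fun t : Fin d => x ↑t))) := by
  rw [pairVal_eq, chSum_apply, map_sum]
  apply Finset.sum_congr rfl
  intro σ _
  rw [map_smul, smul_eq_mul, permAct_tprod, pairT_tprod]
  congr 1

lemma elN_smul_rel (d : ℕ) (τ : S.W d) (y : ℕ → Module.Dual K E) :
    elN S d (fun t => y (((τ : Equiv.Perm ℕ))⁻¹ t))
      = (((S.χ d τ)⁻¹ : Kˣ) : K) • elN S d y := by
  show DirectSum.lof K ℕ (fun d => Qpow S (Module.Dual K E) d) d
      (Submodule.Quotient.mk (PiTensorProduct.tprod K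
        (fun t : Fin d => y (((τ : Equiv.Perm ℕ))⁻¹ ↑t))))
    = (((S.χ d τ)⁻¹ : Kˣ) : K) • DirectSum.lof K ℕ _ d
      (Submodule.Quotient.mk (PiTensorProduct.tprod K (fun t : Fin d => y ↑t)))
  rw [← map_smul, ← Submodule.Quotient.mk_smul]
  congr 1
  have hperm : permAct K (Module.Dual K E) d (rAct S d τ)
      (PiTensorProduct.tprod K (fun t : Fin d => y ↑t))
      = PiTensorProduct.tprod K
        (fun t : Fin d => y (((τ : Equiv.Perm ℕ))⁻¹ ↑t)) := by
    rw [permAct_tprod]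
    rfl
  have hgen : (((S.χ d τ)⁻¹ : Kˣ) : K) •
        PiTensorProduct.tprod K (fun t : Fin d => y ↑t)
      - permAct K (Module.Dual K E) d (rAct S d τ)
        (PiTensorProduct.tprod K (fun t : Fin d => y ↑t))
      ∈ seqKer S (Module.Dual K E) d :=
    Submodule.subset_span ⟨τ, _, rfl⟩
  rw [hperm] at hgen
  exact ((Submodule.Quotient.eq _).mpr hgen).symm

lemma pairVal_shift (d : ℕ) (τ : S.W d) (x : ℕ → E) (y : ℕ → Module.Dual K E) :
    pairVal S d x (fun t => y (((τ : Equiv.Perm ℕ))⁻¹ t))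
      = ((S.χ d τ : Kˣ) : K) * pairVal S d x y := by
  rw [pairVal_eq, pairVal_eq, Finset.mul_sum]
  rw [← Equiv.sum_comp (Equiv.mulLeft τ) (fun σ : S.W d => ((S.χ d σ : Kˣ) : K) *
      ∏ t : Fin d, y (((τ : Equiv.Perm ℕ))⁻¹ ↑t)
        (x (((σ : Equiv.Perm ℕ))⁻¹ ↑t)))]
  apply Finset.sum_congr rfl
  intro ρ _
  simp only [Equiv.coe_mulLeft]
  rw [← Equiv.prod_comp (rAct S d τ) (fun t : Fin d =>
    y (((τ : Equiv.Perm ℕ))⁻¹ ↑t)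
      (x ((((τ * ρ : S.W d) : Equiv.Perm ℕ))⁻¹ ↑t)))]
  rw [map_mul, Units.val_mul, mul_assoc]
  congr 1
  congr 1
  apply Finset.prod_congr rfl
  intro t _
  have h1 : ((rAct S d τ t : Fin d) : ℕ) = (τ : Equiv.Perm ℕ) ↑t := rfl
  have h2 : (((τ : Equiv.Perm ℕ))⁻¹ ((τ : Equiv.Perm ℕ) ↑t)) = ↑t :=
    Equiv.Perm.inv_eq_iff_eq.mpr rfl
  have h3 : (((τ * ρ : S.W d) : Equiv.Perm ℕ))⁻¹ ((τ : Equiv.Perm ℕ) ↑t)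
      = ((ρ : Equiv.Perm ℕ))⁻¹ ↑t := by
    simp [mul_inv_rev]
  rw [h1, h2, h3]

lemma chSum_dichotomy [IsDomain K] {ι : Type*} [Fintype ι] [DecidableEq ι]
    (b : Module.Basis ι K E)
    (B : SemiAlg S E →ₗ[K] SemiAlg S (Module.Dual K E) →ₗ[K] K)
    (hBdec : ∀ (d : ℕ) (x : ℕ → E) (y : ℕ → Module.Dual K E),
      B (elN S d x) (elN S d y) = pairVal S d x y) (d : ℕ) :
    (∀ σ : S.W d, ((S.χ d σ : Kˣ) : K) * ((S.χ d σ : Kˣ) : K) = 1) ∨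
      (∀ z : ⨂[K] (_ : Fin d), E, chSum S d z = 0) := by
  by_cases hA : ∀ σ : S.W d, ((S.χ d σ : Kˣ) : K) * ((S.χ d σ : Kˣ) : K) = 1
  · exact Or.inl hA
  push_neg at hA
  obtain ⟨τ, hτ⟩ := hA
  right
  have hpv : ∀ (x : ℕ → E) (y : ℕ → Module.Dual K E), pairVal S d x y = 0 := by
    intro x y
    have h1 : pairVal S d x (fun t => y (((τ : Equiv.Perm ℕ))⁻¹ t))
        = (((S.χ d τ)⁻¹ : Kˣ) : K) * pairVal S d x y := by
      rw [← hBdec, ← hBdec, elN_smul_rel, map_smul, smul_eq_mul]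
    have h2 := pairVal_shift S d τ x y
    have h3 : ((((S.χ d τ)⁻¹ : Kˣ) : K) - ((S.χ d τ : Kˣ) : K))
        * pairVal S d x y = 0 := by
      rw [sub_mul, ← h1, ← h2, sub_self]
    rcases mul_eq_zero.mp h3 with h | h
    · exfalso
      apply hτ
      have h4 : (((S.χ d τ)⁻¹ : Kˣ) : K) = ((S.χ d τ : Kˣ) : K) :=
        sub_eq_zero.mp h
      calc ((S.χ d τ : Kˣ) : K) * ((S.χ d τ : Kˣ) : K)
          = ((S.χ d τ : Kˣ) : K) * (((S.χ d τ)⁻¹ : Kˣ) : K) := by rw [h4]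
        _ = ((S.χ d τ * (S.χ d τ)⁻¹ : Kˣ) : K) := by rw [Units.val_mul]
        _ = 1 := by rw [mul_inv_cancel, Units.val_one]
    · exact h
  have hz : ∀ x : Fin d → E, chSum S d (PiTensorProduct.tprod K x) = 0 := by
    intro x
    apply pairT_inj_vec b d
    intro y
    have := hpv (extSeq d x) (extSeq d y)
    rw [pairVal_pairT, extSeq_spec, extSeq_spec] at this
    exact this
  intro z
  induction z using PiTensorProduct.induction_on with
  | smul_tprod r f => rw [map_smul, hz, smul_zero]
  | add a c ha hc => rw [map_add, ha, hc, add_zero]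

lemma B_lof_mk (B : SemiAlg S E →ₗ[K] SemiAlg S (Module.Dual K E) →ₗ[K] K)
    (hBdec : ∀ (d : ℕ) (x : ℕ → E) (y : ℕ → Module.Dual K E),
      B (elN S d x) (elN S d y) = pairVal S d x y)
    (d : ℕ) (x : ℕ → E) (u : ⨂[K] (_ : Fin d), Module.Dual K E) :
    B (elN S d x) (DirectSum.lof K ℕ (fun r => Qpow S (Module.Dual K E) r) d
        (Submodule.Quotient.mk u))
      = pairT d u (chSum S d (PiTensorProduct.tprod K (fun t : Fin d => x ↑t))) := by
  induction u using PiTensorProduct.induction_on with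
  | smul_tprod c y =>
    rw [Submodule.Quotient.mk_smul, map_smul, map_smul, map_smul,
      LinearMap.smul_apply]
    congr 1
    have he : elN S d (extSeq d y)
        = DirectSum.lof K ℕ (fun r => Qpow S (Module.Dual K E) r) d
            (Submodule.Quotient.mk (PiTensorProduct.tprod K y)) := by
      show DirectSum.lof K ℕ (fun r => Qpow S (Module.Dual K E) r) d
          (Submodule.Quotient.mk (PiTensorProduct.tprod K
            (fun t : Fin d => extSeq d y ↑t))) = _
      rw [extSeq_spec]
    rw [← he, hBdec, pairVal_pairT, extSeq_spec]
  | add a c ha hc =>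
    rw [Submodule.Quotient.mk_add, map_add, map_add, map_add,
      LinearMap.add_apply, ha, hc]

lemma elN_mem_span (v : SemiAlg S E) :
    v ∈ Submodule.span K {w : SemiAlg S E | ∃ d x, w = elN S d x} := by
  induction v using DirectSum.induction_on with
  | zero => exact zero_mem _
  | of r η =>
    obtain ⟨w, rfl⟩ := Submodule.Quotient.mk_surjective _ η
    induction w using PiTensorProduct.induction_on with
    | smul_tprod c f =>
      have he2 : elN S r (extSeq r f) = DirectSum.lof K ℕ (fun r => Qpow S E r) r
          (Submodule.Quotient.mk (PiTensorProduct.tprod K f)) := by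
        show DirectSum.lof K ℕ (fun r => Qpow S E r) r
          (Submodule.Quotient.mk (PiTensorProduct.tprod K
            (fun t : Fin r => extSeq r f ↑t))) = _
        rw [extSeq_spec]
      have he : DirectSum.of (fun r => Qpow S E r) r
            (Submodule.Quotient.mk (c • PiTensorProduct.tprod K f))
          = c • elN S r (extSeq r f) := by
        rw [← DirectSum.lof_eq_of K, Submodule.Quotient.mk_smul, map_smul, he2]
      rw [he]
      exact Submodule.smul_mem _ _
        (Submodule.subset_span ⟨r, extSeq r f, rfl⟩)
    | add a c ha hc =>
      have he : DirectSum.of (fun r => Qpow S E r) r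
            (Submodule.Quotient.mk (a + c))
          = DirectSum.of (fun r => Qpow S E r) r (Submodule.Quotient.mk a)
            + DirectSum.of (fun r => Qpow S E r) r (Submodule.Quotient.mk c) := by
        rw [← map_add]
        rfl
      rw [he]
      exact add_mem ha hc
  | add a c ha hc => exact add_mem ha hc

lemma splice_assoc (c d : ℕ) (w x y : ℕ → E) :
    splice c w (splice d x y) = splice (c + d) (splice c w x) y := by
  funext t
  unfold splice
  by_cases h1 : t < c
  · rw [if_pos h1, if_pos (by omega), if_pos h1]
  · rw [if_neg h1]
    by_cases h2 : t - c < d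
    · rw [if_pos h2, if_pos (by omega : t < c + d), if_neg h1]
    · rw [if_neg h2, if_neg (by omega : ¬ t < c + d)]
      congr 1
      omega

lemma elN_splice_zero (c : ℕ) (w v : ℕ → E) :
    elN S (c + 0) (splice c w v) = elN S c w := by
  show decEl S c (fun t : Fin c => splice c w v ↑t) = decEl S c (fun t : Fin c => w ↑t)
  exact congrArg _ (funext fun t => if_pos t.2)

end Aux

/-- Proposition V.4. The left inner product
`(a, a*) ↦ a⌋a*` (together with addition) makes `[χ](E*)` a left unital
module over the semi-symmetric algebra `[χ](E)`: the law is `K`-bilinear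
(being a composition of linear maps), `(aχb)⌋a* = a⌋(b⌋a*)`, and
`1⌋a* = a*`. -/
theorem left_inner_product_module {K : Type*} [CommRing K] [Algebra ℚ K]
    [IsDomain K] (S : OmegaSeq K) {E : Type*} [AddCommGroup E] [Module K E]
    [Module.Free K E] [Module.Finite K E]
    (B : SemiAlg S E →ₗ[K] SemiAlg S (Module.Dual K E) →ₗ[K] K)
    (hBorth : ∀ r s : ℕ, r ≠ s →
      ∀ (ξ : Qpow S E r) (η : Qpow S (Module.Dual K E) s),
        B (DirectSum.lof K ℕ (fun d => Qpow S E d) r ξ)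
          (DirectSum.lof K ℕ (fun d => Qpow S (Module.Dual K E) d) s η) = 0)
    (hBdec : ∀ (d : ℕ) (x : ℕ → E) (y : ℕ → Module.Dual K E),
      B (elN S d x) (elN S d y) = pairVal S d x y)
    (mul : SemiAlg S E →ₗ[K] SemiAlg S E →ₗ[K] SemiAlg S E)
    (hmul : ∀ (d e : ℕ) (x y : ℕ → E),
      mul (elN S d x) (elN S e y) = elN S (d + e) (splice d x y))
    (ip : SemiAlg S E →ₗ[K] SemiAlg S (Module.Dual K E) →ₗ[K]
      SemiAlg S (Module.Dual K E))
    (hip : ∀ (d q : ℕ) (w v : ℕ → E) (a' : SemiAlg S (Module.Dual K E)),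
      B (elN S (d + q) (splice d w v)) a' = B (elN S d w) (ip (elN S q v) a')) :
    (∀ (a b : SemiAlg S E) (a' : SemiAlg S (Module.Dual K E)),
      ip (mul a b) a' = ip a (ip b a')) ∧
    (∀ a' : SemiAlg S (Module.Dual K E), ip (elN S 0 (fun _ => 0)) a' = a') := by
  classical
  set b : Module.Basis (Module.Free.ChooseBasisIndex K E) K E := Module.Free.chooseBasis K E
  have hcomp : ∀ (s : ℕ) (x : ℕ → E) (t : SemiAlg S (Module.Dual K E)),
      B (elN S s x) t = B (elN S s x)
        (DirectSum.lof K ℕ (fun r => Qpow S (Module.Dual K E) r) s (t s)) := by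
    intro s x t
    have h : (B (elN S s x)) = (B (elN S s x)).comp
        ((DirectSum.lof K ℕ (fun r => Qpow S (Module.Dual K E) r) s).comp
          (DirectSum.component K ℕ (fun r => Qpow S (Module.Dual K E) r) s)) := by
      apply DirectSum.linearMap_ext
      intro r
      apply LinearMap.ext
      intro η
      simp only [LinearMap.coe_comp, Function.comp_apply]
      by_cases hrs : r = s
      · subst hrs
        rw [DirectSum.component.lof_self]
      · have hc : DirectSum.component K ℕ (fun r => Qpow S (Module.Dual K E) r)
            s (DirectSum.lof K ℕ (fun r => Qpow S (Module.Dual K E) r) r η) = 0 := by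
          rw [DirectSum.component.of, dif_neg hrs]
        rw [hc, map_zero, map_zero]
        exact hBorth s r (fun hh => hrs hh.symm) _ η
    exact LinearMap.congr_fun h t
  have NZ : ∀ t : SemiAlg S (Module.Dual K E),
      (∀ (s : ℕ) (x : ℕ → E), B (elN S s x) t = 0) → t = 0 := by
    intro t ht
    refine DirectSum.ext_component K fun s => ?_
    rw [map_zero]
    show t s = 0
    obtain ⟨u, hu⟩ := Submodule.Quotient.mk_surjective _ (t s)
    rw [← hu]
    suffices hmem : u ∈ seqKer S (Module.Dual K E) s by
      exact (Submodule.Quotient.mk_eq_zero _).mpr hmem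
    apply nondeg_core S b s u (chSum_dichotomy S b B hBdec s)
    intro xfin
    have h1 := ht s (extSeq s xfin)
    rw [hcomp s _ t, ← hu, B_lof_mk S B hBdec s _ u, extSeq_spec] at h1
    exact h1
  constructor
  · have key : ∀ (d e : ℕ) (x y : ℕ → E) (a' : SemiAlg S (Module.Dual K E)),
        ip (elN S (d + e) (splice d x y)) a'
          = ip (elN S d x) (ip (elN S e y) a') := by
      intro d e x y a'
      have hz : ∀ (c : ℕ) (w : ℕ → E), B (elN S c w)
          (ip (elN S (d + e) (splice d x y)) a'
            - ip (elN S d x) (ip (elN S e y) a')) = 0 := by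
        intro c w
        rw [map_sub, ← hip c (d + e) w (splice d x y) a',
          ← hip c d w x (ip (elN S e y) a'),
          ← hip (c + d) e (splice c w x) y a',
          splice_assoc, ← add_assoc, sub_self]
      exact sub_eq_zero.mp (NZ _ hz)
    intro a bb a'
    have main : ∀ v : SemiAlg S E, ∀ (a : SemiAlg S E)
        (a' : SemiAlg S (Module.Dual K E)),
        ip (mul a v) a' = ip a (ip v a') := by
      intro v
      refine Submodule.span_induction
        (p := fun v _ => ∀ (a : SemiAlg S E) (a' : SemiAlg S (Module.Dual K E)),
          ip (mul a v) a' = ip a (ip v a')) ?_ ?_ ?_ ?_ (elN_mem_span S v)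
      · rintro w ⟨e, yy, rfl⟩ a a'
        have inner : ∀ a : SemiAlg S E, ∀ a' : SemiAlg S (Module.Dual K E),
            ip (mul a (elN S e yy)) a' = ip a (ip (elN S e yy) a') := by
          intro a
          refine Submodule.span_induction
            (p := fun a _ => ∀ a' : SemiAlg S (Module.Dual K E),
              ip (mul a (elN S e yy)) a' = ip a (ip (elN S e yy) a'))
            ?_ ?_ ?_ ?_ (elN_mem_span S a)
          · rintro aw ⟨dd, xx, rfl⟩ a'
            rw [hmul, key]
          · intro a'
            simp
          · intro u v hu hv hiu hiv a'
            simp [map_add, LinearMap.add_apply, hiu a', hiv a']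
          · intro c u hu hiu a'
            simp [map_smul, LinearMap.smul_apply, hiu a']
        exact inner a a'
      · intro a a'
        simp
      · intro u v hu hv hiu hiv a a'
        simp [map_add, LinearMap.add_apply, hiu a a', hiv a a']
      · intro c u hu hiu a a'
        simp [map_smul, LinearMap.smul_apply, hiu a a']
    exact main bb a a'
  · intro a'
    have hz : ∀ (c : ℕ) (w : ℕ → E),
        B (elN S c w) (ip (elN S 0 (fun _ => (0 : E))) a' - a') = 0 := by
      intro c w
      rw [map_sub, ← hip c 0 w (fun _ => 0) a', elN_splice_zero, sub_self]
    exact sub_eq_zero.mp (NZ _ hz)
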